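/- For all n ≥ 0, P_{n+2}(x) = 2·Σ_{k=0}^{n} C(n,k)·P_k(x)·P_{n+1-k}(x). -/
import Mathlib


open Polynomial Finset

noncomputable def tanDerivPoly : ℕ → Polynomial ℝ
  | 0 => X
  | n + 1 => (1 + X ^ 2) * derivative (tanDerivPoly n)

noncomputable def tanD : Polynomial ℝ →ₗ[ℝ] Polynomial ℝ :=
  (LinearMap.mulLeft ℝ ((1 : Polynomial ℝ) + X ^ 2)).comp
    (Polynomial.derivative : Polynomial ℝ →ₗ[ℝ] Polynomial ℝ)

lemma tanD_apply (p : Polynomial ℝ) : tanD p = (1 + X ^ 2) * derivative p := rfl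

lemma tanD_mul (p q : Polynomial ℝ) : tanD (p * q) = tanD p * q + p * tanD q := by
  simp only [tanD_apply, derivative_mul]
  ring

lemma tanD_iterate (n m : ℕ) :
    tanD^[n] (tanDerivPoly m) = tanDerivPoly (m + n) := by
  induction n with
  | zero => simp
  | succ n ih =>
    rw [Function.iterate_succ_apply', ih]
    rfl

lemma tanD_iterate_mul (p q : Polynomial ℝ) (n : ℕ) :
    tanD^[n] (p * q) =
      ∑ k ∈ range n.succ, (n.choose k • (tanD^[n - k] p * tanD^[k] q)) := by
  induction n with
  | zero => simp [Finset.range]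
  | succ n IH =>
    calc
      tanD^[n + 1] (p * q) =
          tanD (∑ k ∈ range n.succ,
              n.choose k • (tanD^[n - k] p * tanD^[k] q)) := by
        rw [Function.iterate_succ_apply', IH]
      _ = (∑ k ∈ range n.succ,
            n.choose k • (tanD^[n - k + 1] p * tanD^[k] q)) +
          ∑ k ∈ range n.succ,
            n.choose k • (tanD^[n - k] p * tanD^[k + 1] q) := by
        rw [map_sum]
        simp_rw [map_nsmul, tanD_mul, Function.iterate_succ_apply',
          smul_add, sum_add_distrib]
      _ = (∑ k ∈ range n.succ,
                n.choose k.succ • (tanD^[n - k] p * tanD^[k + 1] q)) +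
              1 • (tanD^[n + 1] p * tanD^[0] q) +
            ∑ k ∈ range n.succ, n.choose k • (tanD^[n - k] p * tanD^[k + 1] q) :=
        ?_
      _ = ((∑ k ∈ range n.succ, n.choose k • (tanD^[n - k] p * tanD^[k + 1] q)) +
              ∑ k ∈ range n.succ,
                n.choose k.succ • (tanD^[n - k] p * tanD^[k + 1] q)) +
            1 • (tanD^[n + 1] p * tanD^[0] q) := by
        rw [add_comm, add_assoc]
      _ = (∑ i ∈ range n.succ,
              (n + 1).choose (i + 1) • (tanD^[n + 1 - (i + 1)] p * tanD^[i + 1] q)) +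
            1 • (tanD^[n + 1] p * tanD^[0] q) := by
        simp_rw [Nat.choose_succ_succ, Nat.succ_sub_succ, add_smul, sum_add_distrib]
      _ = ∑ k ∈ range n.succ.succ,
            n.succ.choose k • (tanD^[n.succ - k] p * tanD^[k] q) := by
        rw [sum_range_succ' _ n.succ, Nat.choose_zero_right, tsub_zero]
    congr
    refine (sum_range_succ' _ _).trans (congr_arg₂ (· + ·) ?_ ?_)
    · rw [sum_range_succ, Nat.choose_succ_self, zero_smul, add_zero]
      refine sum_congr rfl fun k hk => ?_
      rw [mem_range] at hk
      congr
      omega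
    · rw [Nat.choose_zero_right, tsub_zero]

theorem tanDerivPoly_convolution_two (n : ℕ) :
    tanDerivPoly (n + 2) =
      2 * ∑ k ∈ Finset.range (n + 1),
        (n.choose k : Polynomial ℝ) * tanDerivPoly k * tanDerivPoly (n + 1 - k) := by
  have h2 : tanDerivPoly 2 = (2 : ℝ) • (tanDerivPoly 1 * tanDerivPoly 0) := by
    show (1 + X ^ 2) * derivative ((1 + X ^ 2) * derivative (X : Polynomial ℝ)) = _
    show _ = (2 : ℝ) • ((1 + X ^ 2) * derivative (X : Polynomial ℝ) * X)
    simp [smul_eq_C_mul, map_ofNat]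
    ring
  have hsm : ∀ (m : ℕ) (c : ℝ) (p : Polynomial ℝ), tanD^[m] (c • p) = c • tanD^[m] p := by
    intro m
    induction m with
    | zero => intro c p; simp
    | succ m ih =>
      intro c p
      rw [Function.iterate_succ_apply, map_smul, ih, ← Function.iterate_succ_apply]
  have key : tanDerivPoly (n + 2) = tanD^[n] (tanDerivPoly 2) := by
    rw [tanD_iterate]; ring_nf
  rw [key, h2, hsm, tanD_iterate_mul, smul_sum, Finset.mul_sum]
  refine sum_congr rfl fun k hk => ?_
  rw [mem_range] at hk
  rw [tanD_iterate, tanD_iterate]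
  have h1 : 1 + (n - k) = n + 1 - k := by omega
  rw [h1, nsmul_eq_mul, smul_eq_C_mul, map_ofNat]
  ring
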